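/- arXiv:1605.02360 — 9 statements merged into one kernel-verified Lean document; each statement's English description precedes it below -/
import Mathlib

section
/- If every idempotent of R that is isomorphic to a left semicentral idempotent is itself left semicentral, then R is Dedekind-finite. -/
/-- If every idempotent isomorphic to a left semicentral idempotent is itself left
semicentral, then `R` is Dedekind-finite. -/
theorem dedekindFinite_of_iso_leftSemicentral_is_leftSemicentral
    (R : Type*) [Ring R]
    (h : ∀ e f : R, e * e = e → f * f = f →
      (∀ r : R, (1 - e) * r * e = 0) →
      (∃ a b : R, e = a * b ∧ f = b * a) →
      (∀ r : R, (1 - f) * r * f = 0)) :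
    ∀ a b : R, a * b = 1 → b * a = 1 := by
  intro a b hab
  have hff : (b * a) * (b * a) = b * a := by
    rw [mul_assoc, ← mul_assoc a b a, hab, one_mul]
  have key := h 1 (b * a) (one_mul 1) hff (by intro r; simp)
    ⟨a, b, by rw [hab], rfl⟩ a
  have e : (1 - b * a) * a * (b * a) = a - b * a * a := by
    have e0 : (1 - b * a) * a * (b * a) = a * (b * a) - b * a * (a * (b * a)) := by
      noncomm_ring
    rw [e0, ← mul_assoc a b a, hab, one_mul]
  rw [e] at key
  have h2 : a = b * a * a := by
    have := sub_eq_zero.mp key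
    exact this
  calc b * a = b * a * (a * b) := by rw [hab, mul_one]
    _ = (b * a * a) * b := by noncomm_ring
    _ = a * b := by rw [← h2]
    _ = 1 := hab
end

section
/- If every idempotent of R that is isomorphic to a right semicentral idempotent is itself right semicentral, then R is Dedekind-finite. -/
/-- If every idempotent isomorphic to a right semicentral idempotent is itself right
semicentral, then `R` is Dedekind-finite. -/
theorem dedekindFinite_of_iso_rightSemicentral_is_rightSemicentral
    (R : Type*) [Ring R]
    (h : ∀ e f : R, e * e = e → f * f = f →
      (∀ r : R, e * r * (1 - e) = 0) →
      (∃ a b : R, e = a * b ∧ f = b * a) →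
      (∀ r : R, f * r * (1 - f) = 0)) :
    ∀ a b : R, a * b = 1 → b * a = 1 := by
  intro a b hab
  have hf := h 1 (b * a) (by simp)
    (by rw [show b * a * (b * a) = b * (a * b) * a by noncomm_ring, hab, mul_one])
    (by simp) ⟨a, b, hab.symm, rfl⟩ b
  have h2 : a * (b * a * b * (1 - b * a)) = 0 := by rw [hf, mul_zero]
  have h3 : (a * b) * (a * b) * (1 - b * a) = 0 := by rw [← h2]; noncomm_ring
  rw [hab, one_mul, one_mul] at h3
  exact (sub_eq_zero.mp h3).symm
end

section
/- If R is a Dedekind-finite ring with Jacobson radical J, then the quotient ring R/J is Dedekind-finite. -/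
/-- If `R` is Dedekind-finite, then `R / J(R)` is Dedekind-finite, where `J(R)` is
the Jacobson radical (as a two-sided ideal). -/
theorem quotient_jacobson_dedekindFinite
    (R : Type*) [Ring R]
    (hR : ∀ a b : R, a * b = 1 → b * a = 1) :
    ∀ a b : ((⊥ : TwoSidedIdeal R).jacobson.ringCon.Quotient),
      a * b = 1 → b * a = 1 := by
  set J := (⊥ : TwoSidedIdeal R).jacobson with hJ
  intro a b
  induction a using Quotient.inductionOn with
  | h x =>
  induction b using Quotient.inductionOn with
  | h y =>
  intro h
  have hxy : x * y - 1 ∈ J := by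
    rw [← TwoSidedIdeal.rel_iff]
    exact Quotient.exact h
  set j : R := 1 - x * y with hj
  have hjJ : j ∈ J := by
    have := J.neg_mem hxy
    simpa [hj] using this
  have hmem : j ∈ ((⊥ : TwoSidedIdeal R).asIdeal).jacobson := by
    have heq : (⊥ : TwoSidedIdeal R).jacobson.asIdeal
        = ((⊥ : TwoSidedIdeal R).asIdeal).jacobson := TwoSidedIdeal.asIdeal_jacobson _
    rw [← heq]
    simpa [hJ] using hjJ
  obtain ⟨z, hz⟩ := Ideal.mem_jacobson_iff.1 hmem (-1)
  have hz0 : z * -1 * j + z - 1 = 0 := by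
    simpa [TwoSidedIdeal.mem_asIdeal] using hz
  have hz1 : z * (1 - j) = 1 := by
    rw [mul_sub, mul_one, ← sub_eq_zero]
    calc z - z * j - 1 = z * -1 * j + z - 1 := by noncomm_ring
      _ = 0 := hz0
  have hz2 : (1 - j) * z = 1 := hR _ _ hz1
  -- z ≡ 1 mod J
  have hzJ : z - 1 ∈ J := by
    have e : z - z * j = 1 := by rw [mul_sub, mul_one] at hz1; exact hz1
    have e2 : z - 1 = z * j := by
      rw [sub_eq_iff_eq_add] at e ⊢
      exact e.trans (add_comm _ _)
    rw [e2]
    exact J.mul_mem_left _ _ hjJ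
  have hx1 : x * (y * z) = 1 := by
    have hxyj : x * y = 1 - j := by simp [hj]
    calc x * (y * z) = (x * y) * z := (mul_assoc x y z).symm
      _ = (1 - j) * z := by rw [hxyj]
      _ = 1 := hz2
  have hyx : y * z * x = 1 := hR _ _ hx1
  -- now in the quotient
  have h1q : ((1 : R) : J.ringCon.Quotient) = 1 := rfl
  have hzq : ((z : R) : J.ringCon.Quotient) = 1 :=
    (Quotient.sound ((TwoSidedIdeal.rel_iff _ _ _).2 (by simpa using hzJ))).trans h1q
  show ((y : R) : J.ringCon.Quotient) * ((x : R) : J.ringCon.Quotient) = 1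
  calc ((y : R) : J.ringCon.Quotient) * ((x : R) : J.ringCon.Quotient)
      = (y : J.ringCon.Quotient) * 1 * (x : J.ringCon.Quotient) := by rw [mul_one]
    _ = (y : J.ringCon.Quotient) * (z : J.ringCon.Quotient) * (x : J.ringCon.Quotient) := by
        rw [hzq]
    _ = ((y * z * x : R) : J.ringCon.Quotient) := rfl
    _ = ((1 : R) : J.ringCon.Quotient) := by rw [hyx]
    _ = 1 := h1q
end

section
/- If R is a Dedekind-finite ring and e is a nonzero idempotent of R, then the corner ring eRe (with unit e) is Dedekind-finite. -/
/-- If `R` is Dedekind-finite and `e` is a nonzero idempotent, then the corner ring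
`eRe` (with unit `e`) is Dedekind-finite: for `a, b ∈ eRe`, `a*b = e` implies `b*a = e`. -/
theorem corner_ring_dedekindFinite
    (R : Type*) [Ring R]
    (hR : ∀ a b : R, a * b = 1 → b * a = 1)
    (e : R) (he : e * e = e) (hne : e ≠ 0) :
    ∀ a b : R, (∃ r : R, a = e * r * e) → (∃ r : R, b = e * r * e) →
      a * b = e → b * a = e := by
  rintro a b ⟨r, rfl⟩ ⟨s, rfl⟩ hab
  set a := e * r * e with ha
  set b := e * s * e with hb
  have hae : a * e = a := by rw [ha, mul_assoc, he]
  have hea : e * a = a := by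
    rw [ha]; rw [show e * (e * r * e) = (e * e) * r * e by noncomm_ring, he]
  have hbe : b * e = b := by rw [hb, mul_assoc, he]
  have heb : e * b = b := by
    rw [hb]; rw [show e * (e * s * e) = (e * e) * s * e by noncomm_ring, he]
  have key : (a + (1 - e)) * (b + (1 - e)) = 1 := by
    have expand : (a + (1 - e)) * (b + (1 - e))
        = a * b + (a - a * e) + (b - e * b) + (1 - e - e + e * e) := by
      noncomm_ring
    rw [expand, hab, hae, heb, he]; abel

  have key2 := hR _ _ key
  have expand2 : (b + (1 - e)) * (a + (1 - e))
      = b * a + (b - b * e) + (a - e * a) + (1 - e - e + e * e) := by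
    noncomm_ring
  rw [expand2, hbe, hea, he] at key2
  have : b * a + (1 - e) = 1 := by
    have h : b * a + (1 - e) = b * a + (b - b) + (a - a) + (1 - e - e + e) := by abel
    rw [h, key2]
  rw [eq_sub_of_add_eq this]; abel
end

section
/- In a Dedekind-finite ring, any idempotent isomorphic to a left semicentral idempotent is conjugate to it, i.e., f = u*e*u⁻¹ for some unit u. -/
/-- In a Dedekind-finite ring, any idempotent isomorphic to a left semicentral
idempotent is conjugate to it. -/
theorem iso_leftSemicentral_conjugate_of_dedekindFinite
    (R : Type*) [Ring R]
    (hR : ∀ a b : R, a * b = 1 → b * a = 1)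
    (e f : R) (he : e * e = e) (hf : f * f = f)
    (hls : ∀ r : R, (1 - e) * r * e = 0)
    (hiso : ∃ a b : R, e = a * b ∧ f = b * a) :
    ∃ u : Rˣ, f = (u : R) * e * (↑u⁻¹ : R) := by
  obtain ⟨a, b, hab, hba⟩ := hiso
  set a1 : R := e * a * f with ha1
  set b1 : R := f * b * e with hb1
  have hfb : f * b = b * e := by rw [hba, mul_assoc, ← hab]
  have hea : e * a = a * f := by rw [hab, mul_assoc, ← hba]
  have hab1 : a1 * b1 = e := by
    have h1 : a1 * b1 = e * a * (f * f) * b * e := by rw [ha1, hb1]; noncomm_ring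
    rw [h1, hf]
    have h2 : e * a * f * b * e = e * a * (f * b) * e := by noncomm_ring
    rw [h2, hfb]
    have h3 : e * a * (b * e) * e = e * (a * b) * (e * e) := by noncomm_ring
    rw [h3, ← hab, he, he]
  have hba1 : b1 * a1 = f := by
    have h1 : b1 * a1 = f * b * (e * e) * a * f := by rw [ha1, hb1]; noncomm_ring
    rw [h1, he]
    have h2 : f * b * e * a * f = f * b * (e * a) * f := by noncomm_ring
    rw [h2, hea]
    have h3 : f * b * (a * f) * f = f * (b * a) * (f * f) := by noncomm_ring
    rw [h3, ← hba, hf, hf]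
  have heb1 : e * b1 = b1 := by
    have h := hls (f * b)
    have h1 : (1 - e) * (f * b) * e = b1 - e * b1 := by rw [hb1]; noncomm_ring
    rw [h1, sub_eq_zero] at h
    exact h.symm
  have hb1e : b1 * e = b1 := by rw [hb1, mul_assoc, mul_assoc, he, ← mul_assoc]
  have hef : e * f = f := by rw [← hba1, ← mul_assoc, heb1]
  -- Dedekind finiteness step: X*Y = 1 with X = a1*e + 1 - e, Y = b1 + 1 - e
  have hXY : (a1 * e + 1 - e) * (b1 + 1 - e) = 1 := by
    have h1 : (a1 * e + 1 - e) * (b1 + 1 - e) =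
        a1 * (e * b1) + a1 * e - a1 * (e * e) + b1 + 1 - e - e * b1 - e + e * e := by
      noncomm_ring
    rw [h1, heb1, he, hab1]
    abel
  have hYX := hR _ _ hXY
  have hfe : f * e = e := by
    have h1 : (b1 + 1 - e) * (a1 * e + 1 - e) =
        b1 * a1 * e + b1 - b1 * e + a1 * e + 1 - e - e * a1 * e - e + e * e := by
      noncomm_ring
    rw [h1, hba1, hb1e, he] at hYX
    have hea1 : e * a1 = a1 := by rw [ha1, ← mul_assoc, ← mul_assoc, he]
    rw [hea1] at hYX
    have h2 : f * e - e =
        (f * e + b1 - b1 + a1 * e + 1 - e - a1 * e - e + e) - 1 := by abel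
    rw [hYX, sub_self] at h2
    exact sub_eq_zero.mp h2
  refine ⟨⟨1 - f + e, 1 + f - e, ?_, ?_⟩, ?_⟩
  · have h1 : (1 - f + e) * (1 + f - e) =
        1 + f - e - f - f * f + f * e + e + e * f - e * e := by noncomm_ring
    rw [h1, hf, hfe, hef, he]; abel
  · have h1 : (1 + f - e) * (1 - f + e) =
        1 - f + e + f - f * f + f * e - e + e * f - e * e := by noncomm_ring
    rw [h1, hf, hfe, hef, he]; abel
  · show f = (1 - f + e) * e * (1 + f - e)
    have h1 : (1 - f + e) * e * (1 + f - e) =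
        e - f * e + e * e + (e * f - f * (e * f) + e * (e * f))
          - (e * e - f * (e * e) + e * (e * e)) := by noncomm_ring
    rw [h1]
    simp only [he, hef, hfe, hf]
    abel
end

section
/- If e and f are idempotents in a ring R with f - e = x lying in the Jacobson radical of R, then u = 1 + x*(2e - 1) is a unit and f = u*e*u⁻¹. -/
/-!
The element `u = 1 + (f - e) * (2 * e - 1)` satisfies `u * e = f * e = f * u`, a direct
computation with `e² = e` and `f² = f`, and it is a unit because it lies in `1 + J(R)`.
Hence `f = u * e * u⁻¹`.
-/

namespace Ideal

variable {R : Type*} [Ring R]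

theorem exists_mul_eq_one_of_sub_one_mem_jacobson_bot {r : R}
    (h : r - 1 ∈ jacobson (⊥ : Ideal R)) : ∃ s, s * r = 1 := by
  obtain ⟨s, hs⟩ := exists_mul_sub_mem_of_sub_one_mem_jacobson r h
  exact ⟨s, sub_eq_zero.mp (mem_bot.mp hs)⟩

/-- The noncommutative form of `Ideal.isUnit_of_sub_one_mem_jacobson_bot`. -/
theorem isUnit_of_sub_one_mem_jacobson_bot' {r : R}
    (h : r - 1 ∈ jacobson (⊥ : Ideal R)) : IsUnit r := by
  obtain ⟨s, hsr⟩ := exists_mul_eq_one_of_sub_one_mem_jacobson_bot h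
  -- The left inverse `s` lies in `1 + J(R)` too, so it has a left inverse, which must be `r`.
  have hs : s - 1 ∈ jacobson (⊥ : Ideal R) := by
    have : s - 1 = -(s * (r - 1)) := by rw [mul_sub, hsr, mul_one, neg_sub]
    exact this ▸ neg_mem (mul_mem_left _ s h)
  obtain ⟨t, hts⟩ := exists_mul_eq_one_of_sub_one_mem_jacobson_bot hs
  have htr : t = r := left_inv_eq_right_inv hts hsr
  exact ⟨⟨r, s, htr ▸ hts, hsr⟩, rfl⟩

theorem isUnit_one_add_of_mem_jacobson_bot {x : R} (hx : x ∈ jacobson (⊥ : Ideal R)) :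
    IsUnit (1 + x) :=
  isUnit_of_sub_one_mem_jacobson_bot' (by rwa [add_sub_cancel_left])

end Ideal

namespace IsIdempotentElem

variable {R : Type*} [Ring R] {e f : R}

theorem one_add_sub_mul_two_mul_sub_one_mul_eq (he : IsIdempotentElem e) (f : R) :
    (1 + (f - e) * (2 * e - 1)) * e = f * e := by
  have h : (2 * e - 1) * e = e := by
    rw [sub_mul, mul_assoc, he.eq, two_mul, one_mul, add_sub_cancel_right]
  calc (1 + (f - e) * (2 * e - 1)) * e = e + (f - e) * e := by
        rw [add_mul, one_mul, mul_assoc, h]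
    _ = f * e := by rw [sub_mul, he.eq, add_sub_cancel]

theorem mul_one_add_sub_mul_two_mul_sub_one_eq (he : IsIdempotentElem e)
    (hf : IsIdempotentElem f) : f * (1 + (f - e) * (2 * e - 1)) = f * e := by
  have h : (1 - e) * (2 * e - 1) = -(1 - e) := by
    simp only [two_mul, sub_mul, mul_sub, mul_add, one_mul, mul_one, he.eq]
    abel
  calc f * (1 + (f - e) * (2 * e - 1)) = f + f * (1 - e) * (2 * e - 1) := by
        rw [mul_add, mul_one, ← mul_assoc, mul_sub f f, hf.eq, mul_one_sub]
    _ = f * e := by rw [mul_assoc, h, mul_neg, mul_one_sub, neg_sub, add_sub_cancel]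

end IsIdempotentElem

/-- If `e, f` are idempotents with `x = f - e` in the Jacobson radical, then
`u = 1 + x*(2e - 1)` is a unit and `f = u * e * u⁻¹`. -/
theorem conjugating_unit_of_idempotents_diff_in_jacobson
    (R : Type*) [Ring R] (e f : R) (he : e * e = e) (hf : f * f = f)
    (hx : f - e ∈ (⊥ : Ideal R).jacobson) :
    ∃ u : Rˣ, (u : R) = 1 + (f - e) * (2 * e - 1) ∧
      f = (u : R) * e * (↑u⁻¹ : R) := by
  obtain ⟨u, hu⟩ :=
    Ideal.isUnit_one_add_of_mem_jacobson_bot (Ideal.mul_mem_right (2 * e - 1) _ hx)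
  refine ⟨u, hu, ?_⟩
  rw [Units.eq_mul_inv_iff_mul_eq, hu,
    IsIdempotentElem.one_add_sub_mul_two_mul_sub_one_mul_eq he,
    IsIdempotentElem.mul_one_add_sub_mul_two_mul_sub_one_eq he hf]
end

section
/- A ring R is Dedekind-finite if and only if every idempotent isomorphic to a left semicentral idempotent is itself left semicentral. -/
/-- A ring is Dedekind-finite iff every idempotent isomorphic to a left semicentral
idempotent is itself left semicentral. -/
theorem dedekindFinite_iff_iso_leftSemicentral_is_leftSemicentral
    (R : Type*) [Ring R] :
    (∀ a b : R, a * b = 1 → b * a = 1) ↔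
      (∀ e f : R, e * e = e → f * f = f →
        (∀ r : R, (1 - e) * r * e = 0) →
        (∃ a b : R, e = a * b ∧ f = b * a) →
        (∀ r : R, (1 - f) * r * f = 0)) := by
  constructor
  · intro hDF e f he hf hsc hiso r
    obtain ⟨a0, b0, hab0, hba0⟩ := hiso
    -- semicentrality in a convenient form
    have hsc' : ∀ s : R, s * e = e * (s * e) := by
      intro s
      have h := hsc s
      rw [sub_mul, sub_mul, one_mul, sub_eq_zero] at h
      rw [mul_assoc] at h
      exact h
    -- normalized isomorphism witnesses A = e*a0*f, B = f*b0*e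
    have hAB : (e * a0 * f) * (f * b0 * e) = e := by
      calc (e * a0 * f) * (f * b0 * e)
          = e * a0 * (f * f) * b0 * e := by noncomm_ring
        _ = e * a0 * f * b0 * e := by rw [hf]
        _ = e * (a0 * (b0 * a0) * b0) * e := by rw [← hba0]; noncomm_ring
        _ = e * ((a0 * b0) * (a0 * b0)) * e := by noncomm_ring
        _ = e * (e * e) * e := by rw [← hab0]
        _ = e := by rw [he, he, he]
    have hBA : (f * b0 * e) * (e * a0 * f) = f := by
      calc (f * b0 * e) * (e * a0 * f)
          = f * b0 * (e * e) * a0 * f := by noncomm_ring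
        _ = f * b0 * e * a0 * f := by rw [he]
        _ = f * (b0 * (a0 * b0) * a0) * f := by rw [← hab0]; noncomm_ring
        _ = f * ((b0 * a0) * (b0 * a0)) * f := by noncomm_ring
        _ = f * (f * f) * f := by rw [← hba0]
        _ = f := by rw [hf, hf, hf]
    have hBe : (f * b0 * e) * e = f * b0 * e := by
      rw [mul_assoc, he]
    have heB : e * (f * b0 * e) = f * b0 * e := by
      have h := hsc' (f * b0 * e)
      rw [hBe] at h
      exact h.symm
    have hAf : (e * a0 * f) * f = e * a0 * f := by
      rw [mul_assoc, hf]
    have hfB : f * (f * b0 * e) = f * b0 * e := by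
      calc f * (f * b0 * e) = (f * f) * b0 * e := by noncomm_ring
        _ = f * b0 * e := by rw [hf]
    have hef : e * f = f := by
      calc e * f = e * ((f * b0 * e) * (e * a0 * f)) := by rw [hBA]
        _ = (e * (f * b0 * e)) * (e * a0 * f) := by simp only [mul_assoc]
        _ = (f * b0 * e) * (e * a0 * f) := by rw [heB]
        _ = f := hBA
    -- the unit computation
    have hxy : (e * a0 * f + 1 - e) * (f * b0 * e + 1 - f) = 1 := by
      calc (e * a0 * f + 1 - e) * (f * b0 * e + 1 - f)
          = (e * a0 * f) * (f * b0 * e) + (e * a0 * f) - (e * a0 * f) * f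
            + (f * b0 * e) + 1 - f - e * (f * b0 * e) - e + e * f := by noncomm_ring
        _ = e + (e * a0 * f) - (e * a0 * f)
            + (f * b0 * e) + 1 - f - (f * b0 * e) - e + f := by
            rw [hAB, hAf, heB, hef]
        _ = 1 := by abel
    have hyx : (f * b0 * e + 1 - f) * (e * a0 * f + 1 - e) = 1 := hDF _ _ hxy
    have hEq : e * a0 * f + 1 - e - f * (e * a0 * f) + f * e = 1 := by
      calc e * a0 * f + 1 - e - f * (e * a0 * f) + f * e
          = (f * b0 * e + 1 - f) * (e * a0 * f + 1 - e)
            - (f * b0 * e) * (e * a0 * f) + f - (f * b0 * e) + (f * b0 * e) * e := by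
            noncomm_ring
        _ = 1 - f + f - (f * b0 * e) + (f * b0 * e) := by rw [hyx, hBA, hBe]
        _ = 1 := by abel
    -- multiply hEq on the right by B to get f*e = e
    have hfe : f * e = e := by
      have h3 : (e * a0 * f + 1 - e - f * (e * a0 * f) + f * e) * (f * b0 * e)
          = f * b0 * e := by rw [hEq, one_mul]
      have h4 : (e * a0 * f + 1 - e - f * (e * a0 * f) + f * e) * (f * b0 * e)
          = e - f * e + f * b0 * e := by
        calc (e * a0 * f + 1 - e - f * (e * a0 * f) + f * e) * (f * b0 * e)
            = (e * a0 * f) * (f * b0 * e) + (f * b0 * e) - e * (f * b0 * e)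
              - f * ((e * a0 * f) * (f * b0 * e)) + f * (e * (f * b0 * e)) := by
              noncomm_ring
          _ = e + (f * b0 * e) - (f * b0 * e) - f * e + f * (f * b0 * e) := by
              rw [hAB, heB]
          _ = e + (f * b0 * e) - (f * b0 * e) - f * e + (f * b0 * e) := by rw [hfB]
          _ = e - f * e + f * b0 * e := by abel
      have h5 : e - f * e + f * b0 * e = 0 + f * b0 * e := by
        rw [zero_add, ← h4, h3]
      have h6 : e - f * e = 0 := add_right_cancel h5
      rw [sub_eq_zero] at h6
      exact h6.symm
    -- r * f = e * (r * f)
    have hrB : r * (f * b0 * e) = e * (r * (f * b0 * e)) := by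
      have h := hsc' (r * (f * b0 * e))
      rw [mul_assoc r (f * b0 * e) e, hBe] at h
      exact h
    have hrf : r * f = e * (r * f) := by
      calc r * f = r * ((f * b0 * e) * (e * a0 * f)) := by rw [hBA]
        _ = (r * (f * b0 * e)) * (e * a0 * f) := by simp only [mul_assoc]
        _ = (e * (r * (f * b0 * e))) * (e * a0 * f) := by conv_lhs => rw [hrB]
        _ = e * (r * ((f * b0 * e) * (e * a0 * f))) := by simp only [mul_assoc]
        _ = e * (r * f) := by rw [hBA]
    calc (1 - f) * r * f = (1 - f) * (r * f) := by simp only [mul_assoc]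
      _ = (1 - f) * (e * (r * f)) := by conv_lhs => rw [hrf]
      _ = ((1 - f) * e) * (r * f) := by simp only [mul_assoc]
      _ = (e - f * e) * (r * f) := by rw [sub_mul, one_mul]
      _ = 0 := by rw [hfe, sub_self, zero_mul]
  · intro h a b hab
    have hf : (b * a) * (b * a) = b * a := by
      calc (b * a) * (b * a) = b * (a * b) * a := by noncomm_ring
        _ = b * a := by rw [hab, mul_one]
    have h1 := h 1 (b * a) (one_mul 1) hf (by simp) ⟨a, b, hab.symm, rfl⟩
    have h2 := h1 a
    rw [sub_mul, sub_mul, one_mul, sub_eq_zero] at h2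
    -- h2 : a * (b * a) = b * a * a * (b * a)
    have key : a = b * a * a * (b * a) := by
      rw [← h2, ← mul_assoc, hab, one_mul]
    have hfin : (1 : R) = b * a := by
      calc (1 : R) = a * b := hab.symm
        _ = (b * a * a * (b * a)) * b := by rw [← key]
        _ = b * (a * (a * b)) * (a * b) := by noncomm_ring
        _ = b * a := by rw [hab, mul_one, mul_one]
    exact hfin.symm
end

section
/- A ring R is Dedekind-finite if and only if every idempotent isomorphic to a left or right semicentral idempotent is conjugate to it by a unit. -/
/-- A ring is Dedekind-finite iff every idempotent isomorphic to a left or right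
semicentral idempotent is conjugate to it by a unit. -/
theorem dedekindFinite_iff_iso_semicentral_conjugate
    (R : Type*) [Ring R] :
    (∀ a b : R, a * b = 1 → b * a = 1) ↔
      (∀ e f : R, e * e = e → f * f = f →
        ((∀ r : R, (1 - e) * r * e = 0) ∨ (∀ r : R, e * r * (1 - e) = 0)) →
        (∃ a b : R, e = a * b ∧ f = b * a) →
        ∃ u : Rˣ, f = (u : R) * e * (↑u⁻¹ : R)) := by
  constructor
  · rintro hdf e f he hf hsc ⟨a₀, b₀, hab₀, hba₀⟩
    set a := e * a₀ * f with ha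
    set b := f * b₀ * e with hb
    have haf : a * f = a := by
      calc a * f = e * a₀ * (f * f) := by rw [ha]; noncomm_ring
        _ = a := by rw [hf]
    have hbe : b * e = b := by
      calc b * e = f * b₀ * (e * e) := by rw [hb]; noncomm_ring
        _ = b := by rw [he]
    have hfb : f * b = b := by
      calc f * b = (f * f) * b₀ * e := by rw [hb]; noncomm_ring
        _ = b := by rw [hf]
    have hab : a * b = e := by
      calc a * b = e * a₀ * (f * f) * b₀ * e := by rw [ha, hb]; noncomm_ring
        _ = e * a₀ * f * b₀ * e := by rw [hf]
        _ = e * ((a₀ * b₀) * (a₀ * b₀)) * e := by rw [hba₀]; noncomm_ring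
        _ = e * (e * e) * e := by rw [← hab₀]
        _ = e := by rw [he, he, he]
    have hba : b * a = f := by
      calc b * a = f * b₀ * (e * e) * a₀ * f := by rw [ha, hb]; noncomm_ring
        _ = f * b₀ * e * a₀ * f := by rw [he]
        _ = f * ((b₀ * a₀) * (b₀ * a₀)) * f := by rw [hab₀]; noncomm_ring
        _ = f * (f * f) * f := by rw [← hba₀]
        _ = f := by rw [hf, hf, hf]
    have h0e : (1 - e) * e = 0 := by rw [sub_mul, one_mul, he, sub_self]
    have hee : (1 - e) * (1 - e) = 1 - e := by
      rw [mul_sub, mul_one, h0e, sub_zero]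
    have hkey : (1 - e) * (1 - f) * (1 - e) = 1 - e := by
      rcases hsc with hL | hR
      · -- left semicentral: (1-e)*b = 0, hence (1-e)*f = 0
        have heb0 : (1 - e) * b = 0 := by
          calc (1 - e) * b = (1 - e) * (f * b₀) * e := by rw [hb]; noncomm_ring
            _ = 0 := hL (f * b₀)
        have hef0 : (1 - e) * f = 0 := by
          calc (1 - e) * f = (1 - e) * b * a := by rw [← hba]; noncomm_ring
            _ = 0 := by rw [heb0, zero_mul]
        have h2 : (1 - e) * (1 - f) = 1 - e := by
          rw [mul_sub, mul_one, hef0, sub_zero]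
        rw [h2, hee]
      · -- right semicentral: a*(1-e) = 0, hence f*(1-e) = 0
        have hae0 : a * (1 - e) = 0 := by
          calc a * (1 - e) = e * (a₀ * f) * (1 - e) := by rw [ha]; noncomm_ring
            _ = 0 := hR (a₀ * f)
        have hfe0 : f * (1 - e) = 0 := by
          calc f * (1 - e) = b * (a * (1 - e)) := by rw [← hba]; noncomm_ring
            _ = 0 := by rw [hae0, mul_zero]
        have h2 : (1 - f) * (1 - e) = 1 - e := by
          rw [sub_mul, one_mul, hfe0, sub_zero]
        rw [mul_assoc, h2, hee]
    have haf0 : a * (1 - f) = 0 := by rw [mul_sub, mul_one, haf, sub_self]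
    have hfb0 : (1 - f) * b = 0 := by rw [sub_mul, one_mul, hfb, sub_self]
    have hff : (1 - f) * (1 - f) = 1 - f := by
      have h0f : (1 - f) * f = 0 := by rw [sub_mul, one_mul, hf, sub_self]
      rw [mul_sub, mul_one, h0f, sub_zero]
    set u := b + (1 - f) * (1 - e) with hu
    set v := a + (1 - e) * (1 - f) with hv
    have hvu : v * u = 1 := by
      have expand : v * u =
          a * b + a * (1 - f) * (1 - e) + (1 - e) * (1 - f) * b +
            (1 - e) * ((1 - f) * (1 - f)) * (1 - e) := by
        rw [hu, hv]; noncomm_ring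
      rw [expand, hab, hff, haf0, zero_mul, mul_assoc (1 - e) (1 - f) b, hfb0,
        mul_zero, hkey]
      abel
    have huv : u * v = 1 := hdf v u hvu
    refine ⟨⟨u, v, huv, hvu⟩, ?_⟩
    show f = u * e * v
    have hue : u * e = b := by
      calc u * e = b * e + (1 - f) * ((1 - e) * e) := by rw [hu]; noncomm_ring
        _ = b := by rw [h0e, mul_zero, add_zero, hbe]
    have hbv : b * v = f := by
      have hbe0 : b * (1 - e) = 0 := by rw [mul_sub, mul_one, hbe, sub_self]
      calc b * v = b * a + b * (1 - e) * (1 - f) := by rw [hv]; noncomm_ring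
        _ = f := by rw [hba, hbe0, zero_mul, add_zero]
    rw [hue, hbv]
  · intro h a b hab
    have hfidem : (b * a) * (b * a) = b * a := by
      calc (b * a) * (b * a) = b * (a * b) * a := by noncomm_ring
        _ = b * a := by rw [hab, mul_one]
    obtain ⟨u, hu⟩ := h 1 (b * a) (one_mul 1) hfidem
      (Or.inl fun r => by simp) ⟨a, b, hab.symm, rfl⟩
    rw [mul_one] at hu
    rw [hu, Units.mul_inv]
end

section
/- Let M be a right R-module. End(M) is Dedekind-finite if and only if for any isomorphic direct summands D₁, D₂ of M with Hom(D₁, M/D₁) = 0, one also has Hom(D₂, M/D₂) = 0. -/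
/-!
If `Hom(D₁, M/D₁) = 0`, then every map `D₁ → M` lands in `D₁`; in particular an isomorphic
summand `D₂` lies inside `D₁`. Gluing the isomorphism `D₁ ≃ D₂` with the identity of a complement
of `D₁` gives an endomorphism of `M` with a left inverse, whose surjectivity (Dedekind-finiteness)
forces `D₂ = D₁`.

Conversely, if `a * b = 1` in `End(M)`, then `range b` is a summand isomorphic to `M = ⊤`, and
`Hom(⊤, M/⊤) = 0` trivially; the condition gives `Hom(range b, M/range b) = 0`, which for a
submodule isomorphic to `M` means `range b = ⊤`, so `b` is invertible.
-/

open LinearMap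

section

variable {R M : Type*} [Ring R] [AddCommGroup M] [Module R M]

namespace Submodule

theorem range_le_of_forall_hom_quotient_eq_zero {D : Submodule R M}
    (hD : ∀ g : D →ₗ[R] M ⧸ D, g = 0) (φ : D →ₗ[R] M) : range φ ≤ D := by
  simpa [← range_le_ker_iff] using hD (D.mkQ ∘ₗ φ)

theorem le_of_linearEquiv_of_forall_hom_quotient_eq_zero {D₁ D₂ : Submodule R M}
    (f : D₁ ≃ₗ[R] D₂) (hD₁ : ∀ g : D₁ →ₗ[R] M ⧸ D₁, g = 0) : D₂ ≤ D₁ := by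
  simpa [range_comp_of_range_eq_top] using
    range_le_of_forall_hom_quotient_eq_zero hD₁ (D₂.subtype ∘ₗ f.toLinearMap)

theorem eq_top_of_linearEquiv_of_forall_hom_quotient_eq_zero {N : Submodule R M}
    (e : N ≃ₗ[R] M) (hN : ∀ g : N →ₗ[R] M ⧸ N, g = 0) : N = ⊤ := by
  simpa using range_le_of_forall_hom_quotient_eq_zero hN e.toLinearMap

theorem eq_of_le_of_linearEquiv [IsDedekindFiniteMonoid (Module.End R M)]
    {D₁ D₁' D₂ D₂' : Submodule R M} (h₁ : IsCompl D₁ D₁') (h₂ : IsCompl D₂ D₂')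
    (hle : D₂ ≤ D₁) (f : D₁ ≃ₗ[R] D₂) : D₁ = D₂ := by
  let π₂ := D₂.projectionOnto D₂' h₂
  let b : Module.End R M := ofIsCompl h₁ (D₂.subtype ∘ₗ f.toLinearMap) D₁'.subtype
  -- `a` undoes `f` on `D₁` because `f` lands in `D₂ ⊆ D₁`, where `π₂` is the identity.
  let a : Module.End R M :=
    ofIsCompl h₁ (D₁.subtype ∘ₗ f.symm.toLinearMap ∘ₗ π₂ ∘ₗ D₁.subtype) D₁'.subtype
  have hab : a * b = 1 := by
    refine (ofIsCompl_eq h₁ (fun u => ?_) (fun u => ?_)).symm.trans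
      (ofIsCompl_eq (φ := D₁.subtype) (ψ := D₁'.subtype) h₁ (fun _ => rfl) (fun _ => rfl))
    · have hu : (f u : M) ∈ D₁ := hle (f u).2
      simp [b, a, π₂, ofIsCompl_apply_left h₁ ⟨_, hu⟩]
    · simp [b, a]
  have hba := mul_eq_one_symm hab
  refine le_antisymm (fun x hx => ?_) hle
  have hax : a x = f.symm (π₂ x) := ofIsCompl_apply_left h₁ ⟨x, hx⟩
  have hbax : b (a x) = x := congr($hba x)
  rw [← hbax, hax, ofIsCompl_apply_left]
  exact (f _).2

end Submodule

namespace LinearMap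

theorem isCompl_range_ker_mul_of_mul_eq_one {a b : Module.End R M} (hab : a * b = 1) :
    IsCompl (range b) (ker (b * a)) := by
  have hidem : IsIdempotentElem (b * a) := by
    rw [IsIdempotentElem, mul_assoc, ← mul_assoc a, hab, one_mul]
  have ha : Function.Surjective a := Function.LeftInverse.surjective (congr($hab ·))
  simpa [Module.End.mul_eq_comp, range_comp_of_range_eq_top b (range_eq_top.2 ha)] using
    hidem.isCompl

end LinearMap

theorem Module.End.isDedekindFiniteMonoid_of_forall_isCompl_linearEquiv
    (h : ∀ N N' : Submodule R M, IsCompl N N' → Nonempty (N ≃ₗ[R] M) → N = ⊤) :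
    IsDedekindFiniteMonoid (Module.End R M) := by
  refine ⟨fun {a b} hab => ?_⟩
  have hb : Function.Injective b := Function.LeftInverse.injective (congr($hab ·))
  have hrange : range b = ⊤ := h _ _ (isCompl_range_ker_mul_of_mul_eq_one hab)
    ⟨(LinearEquiv.ofInjective b hb).symm⟩
  ext x
  obtain ⟨y, rfl⟩ := range_eq_top.1 hrange x
  simp [← Module.End.mul_apply, mul_assoc, hab]

end

/-- `End(M)` is Dedekind-finite iff for all isomorphic direct summands `D₁, D₂` of
`M` with `Hom(D₁, M/D₁) = 0`, also `Hom(D₂, M/D₂) = 0`. -/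
theorem end_dedekindFinite_iff_summand_condition
    (R : Type*) [Ring R] (M : Type*) [AddCommGroup M] [Module R M] :
    (∀ a b : Module.End R M, a * b = 1 → b * a = 1) ↔
      (∀ D₁ D₂ : Submodule R M,
        (∃ D₁' : Submodule R M, IsCompl D₁ D₁') →
        (∃ D₂' : Submodule R M, IsCompl D₂ D₂') →
        Nonempty (D₁ ≃ₗ[R] D₂) →
        (∀ g : D₁ →ₗ[R] (M ⧸ D₁), g = 0) →
        (∀ g : D₂ →ₗ[R] (M ⧸ D₂), g = 0)) := by
  constructor
  · rintro hDF D₁ D₂ ⟨D₁', h₁⟩ ⟨D₂', h₂⟩ ⟨f⟩ hD₁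
    have : IsDedekindFiniteMonoid (Module.End R M) := ⟨hDF _ _⟩
    obtain rfl := Submodule.eq_of_le_of_linearEquiv h₁ h₂
      (Submodule.le_of_linearEquiv_of_forall_hom_quotient_eq_zero f hD₁) f
    exact hD₁
  · intro h
    have hsummand : ∀ N N' : Submodule R M, IsCompl N N' → Nonempty (N ≃ₗ[R] M) → N = ⊤ := by
      rintro N N' hN ⟨e⟩
      have htop : ∀ g : (⊤ : Submodule R M) →ₗ[R] M ⧸ (⊤ : Submodule R M), g = 0 := fun g =>
        Subsingleton.elim _ _
      exact Submodule.eq_top_of_linearEquiv_of_forall_hom_quotient_eq_zero e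
        (h ⊤ N ⟨⊥, isCompl_top_bot⟩ ⟨N', hN⟩ ⟨Submodule.topEquiv.trans e.symm⟩ htop)
    exact fun _ _ => (Module.End.isDedekindFiniteMonoid_of_forall_isCompl_linearEquiv hsummand).1
end
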